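/- arXiv:2203.09218 — 3 statements merged into one kernel-verified Lean document; each statement's English description precedes it below -/
import Mathlib

section
/- For every p > 1 and every δ ≥ 0 with p - 2 - δ ≥ 0, there exists a constant C > 0 such that for all ζ, γ ∈ ℝ^n, ⟨|ζ|^{p-2} ζ - |γ|^{p-2} γ, ζ - γ⟩ ≥ C |ζ - γ|^{2+δ} (|ζ| + |γ|)^{p-2-δ}. -/
open scoped RealInnerProductSpace

private lemma pLap_aux (p : ℝ) (hp : 2 ≤ p) (s r t : ℝ) (hs : 0 ≤ s) (hr : 0 ≤ r)
    (ht : t ≤ s * r) (hrs : r ≤ s) :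
    (2 * (2:ℝ) ^ (p - 2))⁻¹ * (s ^ 2 + r ^ 2 - 2 * t) * (s + r) ^ (p - 2) ≤
      s ^ (p - 2) * s ^ 2 + r ^ (p - 2) * r ^ 2 - (s ^ (p - 2) + r ^ (p - 2)) * t := by
  have hp2 : (0:ℝ) ≤ p - 2 := by linarith
  set A := s ^ (p - 2) with hAdef
  set B := r ^ (p - 2) with hBdef
  set M := (s + r) ^ (p - 2) with hMdef
  set c := (2:ℝ) ^ (p - 2) with hcdef
  have hc : (0:ℝ) < c := Real.rpow_pos_of_pos (by norm_num) _
  have hA : 0 ≤ A := Real.rpow_nonneg hs _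
  have hB : 0 ≤ B := Real.rpow_nonneg hr _
  have hBA : B ≤ A := Real.rpow_le_rpow hr hrs hp2
  have h2c : (0:ℝ) < 2 * c := by linarith
  have hMA : M ≤ c * A := by
    have h1 : (s + r) ^ (p - 2) ≤ (2 * s) ^ (p - 2) :=
      Real.rpow_le_rpow (by linarith) (by linarith) hp2
    have h2 : ((2:ℝ) * s) ^ (p - 2) = c * A := Real.mul_rpow (by norm_num) hs
    rw [hMdef, hAdef, hcdef]
    calc (s + r) ^ (p - 2) ≤ (2 * s) ^ (p - 2) := h1
    _ = _ := h2
  have key1 : (2 * c)⁻¹ * M * 2 ≤ A := by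
    have h := mul_le_mul_of_nonneg_left hMA (le_of_lt (inv_pos.mpr h2c))
    have heq : (2 * c)⁻¹ * (c * A) = A / 2 := by field_simp
    rw [heq] at h
    linarith
  have hDM : 0 ≤ (2 * c)⁻¹ * M := by
    have : 0 ≤ M := Real.rpow_nonneg (by linarith) _
    positivity
  have f1 : 0 ≤ (A - (2 * c)⁻¹ * M) * (s - r) ^ 2 :=
    mul_nonneg (by linarith) (sq_nonneg _)
  have f2 : 0 ≤ (A * r - B * r) * (s - r) :=
    mul_nonneg (by nlinarith [mul_le_mul_of_nonneg_right hBA hr]) (by linarith)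
  have f3 : 0 ≤ (A + B - 2 * ((2 * c)⁻¹ * M)) * (s * r - t) :=
    mul_nonneg (by linarith) (by linarith)
  nlinarith [f1, f2, f3]

private lemma pLap_key (p : ℝ) (hp : 2 ≤ p) (s r t : ℝ) (hs : 0 ≤ s) (hr : 0 ≤ r)
    (ht : t ≤ s * r) :
    (2 * (2:ℝ) ^ (p - 2))⁻¹ * (s ^ 2 + r ^ 2 - 2 * t) * (s + r) ^ (p - 2) ≤
      s ^ (p - 2) * s ^ 2 + r ^ (p - 2) * r ^ 2 - (s ^ (p - 2) + r ^ (p - 2)) * t := by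
  rcases le_total r s with h | h
  · exact pLap_aux p hp s r t hs hr ht h
  · have hts : t ≤ r * s := by rw [mul_comm]; exact ht
    have := pLap_aux p hp r s t hr hs hts h
    rw [add_comm r s] at this
    linarith

theorem pLaplacian_monotone_delta (p δ : ℝ) (hp : p > 1) (hδ : δ ≥ 0)
    (hpδ : p - 2 - δ ≥ 0) (n : ℕ) :
    ∃ C > 0, ∀ ζ γ : EuclideanSpace ℝ (Fin n),
      ⟪(‖ζ‖ ^ (p - 2)) • ζ - (‖γ‖ ^ (p - 2)) • γ, ζ - γ⟫ ≥
        C * ‖ζ - γ‖ ^ (2 + δ) * (‖ζ‖ + ‖γ‖) ^ (p - 2 - δ) := by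
  have hp2 : (2:ℝ) ≤ p := by linarith
  have hc : (0:ℝ) < (2 * (2:ℝ) ^ (p - 2))⁻¹ := by positivity
  refine ⟨(2 * (2:ℝ) ^ (p - 2))⁻¹, hc, fun ζ γ => ?_⟩
  set s := ‖ζ‖ with hsdef
  set r := ‖γ‖ with hrdef
  have hs : 0 ≤ s := norm_nonneg _
  have hr : 0 ≤ r := norm_nonneg _
  have ht : ⟪ζ, γ⟫ ≤ s * r := real_inner_le_norm ζ γ
  have hkey := pLap_key p hp2 s r ⟪ζ, γ⟫ hs hr ht
  have hLHS : ⟪(s ^ (p - 2)) • ζ - (r ^ (p - 2)) • γ, ζ - γ⟫ =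
      s ^ (p - 2) * s ^ 2 + r ^ (p - 2) * r ^ 2 - (s ^ (p - 2) + r ^ (p - 2)) * ⟪ζ, γ⟫ := by
    simp only [inner_sub_left, inner_sub_right, real_inner_smul_left,
      real_inner_self_eq_norm_sq, real_inner_comm γ ζ]
    ring
  have hns : ‖ζ - γ‖ ^ 2 = s ^ 2 + r ^ 2 - 2 * ⟪ζ, γ⟫ := by
    rw [norm_sub_sq_real]; ring
  have hred : ‖ζ - γ‖ ^ (2 + δ) * (s + r) ^ (p - 2 - δ) ≤ ‖ζ - γ‖ ^ 2 * (s + r) ^ (p - 2) := by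
    rcases eq_or_lt_of_le hδ with h0 | h0
    · rw [← h0]
      rw [show (2:ℝ) + 0 = ((2:ℕ):ℝ) by norm_num, Real.rpow_natCast]
      rw [show p - 2 - 0 = p - 2 by ring]
    · have h1 : ‖ζ - γ‖ ^ (2 + δ) = ‖ζ - γ‖ ^ (2:ℝ) * ‖ζ - γ‖ ^ δ :=
        Real.rpow_add' (norm_nonneg _) (by linarith)
      have h2 : (s + r) ^ δ * (s + r) ^ (p - 2 - δ) = (s + r) ^ (p - 2) := by
        rw [← Real.rpow_add' (by positivity) ?_]
        · rw [show δ + (p - 2 - δ) = p - 2 by ring]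
        · rw [show δ + (p - 2 - δ) = p - 2 by ring]
          exact ne_of_gt (by linarith)
      have h3 : ‖ζ - γ‖ ^ δ ≤ (s + r) ^ δ :=
        Real.rpow_le_rpow (norm_nonneg _) (norm_sub_le ζ γ) h0.le
      have h4 : ‖ζ - γ‖ ^ (2:ℝ) = ‖ζ - γ‖ ^ 2 := Real.rpow_two _
      have h5 : 0 ≤ (s + r) ^ (p - 2 - δ) := Real.rpow_nonneg (by positivity) _
      calc ‖ζ - γ‖ ^ (2 + δ) * (s + r) ^ (p - 2 - δ)
          = ‖ζ - γ‖ ^ 2 * (‖ζ - γ‖ ^ δ * (s + r) ^ (p - 2 - δ)) := by rw [h1, h4]; ring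
        _ ≤ ‖ζ - γ‖ ^ 2 * ((s + r) ^ δ * (s + r) ^ (p - 2 - δ)) := by
            apply mul_le_mul_of_nonneg_left _ (sq_nonneg _)
            exact mul_le_mul_of_nonneg_right h3 h5
        _ = ‖ζ - γ‖ ^ 2 * (s + r) ^ (p - 2) := by rw [h2]
  rw [ge_iff_le, hLHS]
  calc (2 * (2:ℝ) ^ (p - 2))⁻¹ * ‖ζ - γ‖ ^ (2 + δ) * (s + r) ^ (p - 2 - δ)
      = (2 * (2:ℝ) ^ (p - 2))⁻¹ * (‖ζ - γ‖ ^ (2 + δ) * (s + r) ^ (p - 2 - δ)) := by ring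
    _ ≤ (2 * (2:ℝ) ^ (p - 2))⁻¹ * (‖ζ - γ‖ ^ 2 * (s + r) ^ (p - 2)) :=
        mul_le_mul_of_nonneg_left hred hc.le
    _ = (2 * (2:ℝ) ^ (p - 2))⁻¹ * (s ^ 2 + r ^ 2 - 2 * ⟪ζ, γ⟫) * (s + r) ^ (p - 2) := by
        rw [hns]; ring
    _ ≤ _ := hkey
end

section
/- Let p > 2 and let a, b ∈ ℝ^n. Then ⟨|a|^{p-2} a - |b|^{p-2} b, a - b⟩ ≥ 2^{2-p} |a - b|^p. -/
open scoped RealInnerProductSpace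

/-! Polarization turns the pairing into `(A + B)/2 |a - b|² + (A - B)/2 (|a|² - |b|²)` with
`A = |a|^(p-2)`, `B = |b|^(p-2)`; the second term is nonnegative as `t ↦ t^(p-2)` is monotone.
One cannot simply bound `(A + B)/2` below by `((|a| + |b|)/2)^(p-2) ≥ (|a - b|/2)^(p-2)`, since
`t^(p-2)` is concave for `p < 3`; instead, after multiplying by `|a| + |b|`, convexity of
`t^(p-1)` gives `((|a| + |b|)/2)^(p-2) (|a| + |b|) ≤ A |a| + B |b|`, and the monotonicity term
absorbs the rest using `|a - b| ≤ |a| + |b|`. -/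

theorem real_inner_smul_sub_smul_sub {E : Type*} [NormedAddCommGroup E] [InnerProductSpace ℝ E]
    (α β : ℝ) (a b : E) :
    ⟪α • a - β • b, a - b⟫ =
      (α + β) / 2 * ‖a - b‖ ^ 2 + (α - β) / 2 * (‖a‖ ^ 2 - ‖b‖ ^ 2) := by
  simp only [inner_sub_left, inner_sub_right, real_inner_smul_left, real_inner_self_eq_norm_sq,
    real_inner_comm a b, norm_sub_sq_real]
  ring

namespace Real

variable {x y : ℝ}

theorem rpow_sub_rpow_mul_sub_nonneg (hx : 0 ≤ x) (hy : 0 ≤ y) {q : ℝ} (hq : 0 ≤ q) :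
    0 ≤ (x ^ q - y ^ q) * (x - y) := by
  rcases le_total y x with hyx | hxy
  · exact mul_nonneg (sub_nonneg.2 (rpow_le_rpow hy hyx hq)) (sub_nonneg.2 hyx)
  · exact mul_nonneg_of_nonpos_of_nonpos (sub_nonpos.2 (rpow_le_rpow hx hxy hq))
      (sub_nonpos.2 hxy)

theorem two_mul_add_div_two_rpow_le (hx : 0 ≤ x) (hy : 0 ≤ y) {q : ℝ} (hq : 1 ≤ q) :
    2 * ((x + y) / 2) ^ q ≤ x ^ q + y ^ q := by
  have h := (convexOn_rpow hq).2 (Set.mem_Ici.2 hx) (Set.mem_Ici.2 hy)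
    (by norm_num : (0 : ℝ) ≤ 1 / 2) (by norm_num : (0 : ℝ) ≤ 1 / 2) (by norm_num)
  simp only [smul_eq_mul] at h
  rw [show (x + y) / 2 = 1 / 2 * x + 1 / 2 * y by ring]
  linarith

theorem two_rpow_two_sub_mul_rpow {p D : ℝ} (hD : 0 < D) :
    2 ^ (2 - p) * D ^ p = (D / 2) ^ (p - 2) * D ^ 2 := by
  have hDp : D ^ p = D ^ (p - 2) * D ^ 2 := by
    rw [← rpow_natCast, ← rpow_add hD]; norm_num
  rw [hDp, div_rpow hD.le zero_le_two, show 2 - p = -(p - 2) by ring, rpow_neg zero_le_two]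
  ring

theorem add_div_two_rpow_mul_add_le (hx : 0 ≤ x) (hy : 0 ≤ y) {q : ℝ} (hq : 0 ≤ q) :
    ((x + y) / 2) ^ q * (x + y) ≤ x ^ q * x + y ^ q * y := by
  have hq1 : q + 1 ≠ 0 := by linarith
  have hmean := two_mul_add_div_two_rpow_le hx hy (q := q + 1) (by linarith)
  rw [rpow_add_one' hx hq1, rpow_add_one' hy hq1, rpow_add_one' (by positivity) hq1] at hmean
  linarith

theorem two_rpow_two_sub_mul_rpow_le {p D : ℝ} (hp : 2 ≤ p) (hx : 0 ≤ x) (hy : 0 ≤ y)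
    (hD : 0 ≤ D) (hDxy : D ≤ x + y) :
    2 ^ (2 - p) * D ^ p ≤
      (x ^ (p - 2) + y ^ (p - 2)) / 2 * D ^ 2
        + (x ^ (p - 2) - y ^ (p - 2)) / 2 * (x ^ 2 - y ^ 2) := by
  have hmono := rpow_sub_rpow_mul_sub_nonneg hx hy (q := p - 2) (by linarith)
  rcases hD.eq_or_lt with rfl | hDpos
  · rw [zero_rpow (by linarith)]
    nlinarith [mul_nonneg hmono (add_nonneg hx hy)]
  have hs : 0 < x + y := hDpos.trans_le hDxy
  have hsq : D ^ 2 ≤ (x + y) ^ 2 := by gcongr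
  calc 2 ^ (2 - p) * D ^ p = (D / 2) ^ (p - 2) * D ^ 2 := two_rpow_two_sub_mul_rpow hDpos
    _ ≤ ((x + y) / 2) ^ (p - 2) * D ^ 2 := by gcongr
    _ ≤ _ := by
      refine le_of_mul_le_mul_right ?_ hs
      have hmean := add_div_two_rpow_mul_add_le hx hy (q := p - 2) (by linarith)
      nlinarith [mul_nonneg hmono (sub_nonneg.2 hsq),
        mul_le_mul_of_nonneg_right hmean (sq_nonneg D)]

end Real

theorem pLaplacian_strong_monotone_explicit (p : ℝ) (hp : p > 2) (n : ℕ)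
    (a b : EuclideanSpace ℝ (Fin n)) :
    ⟪(‖a‖ ^ (p - 2)) • a - (‖b‖ ^ (p - 2)) • b, a - b⟫ ≥
      (2 : ℝ) ^ (2 - p) * ‖a - b‖ ^ p := by
  rw [ge_iff_le, real_inner_smul_sub_smul_sub]
  exact Real.two_rpow_two_sub_mul_rpow_le hp.le (norm_nonneg a) (norm_nonneg b) (norm_nonneg _)
    (norm_sub_le a b)
end

section
/- For p > 2 and any a, b ∈ ℝ^n, | |a|^{p-2} a - |b|^{p-2} b | ≤ (p-1) (|a| + |b|)^{p-2} |a - b|. -/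
/-!
By the mean value theorem, `x ^ q - y ^ q = q c ^ (q - 1) (x - y)` for some `y < c < x`, and
`c ^ (q - 1) y ≤ c ^ q ≤ x ^ q`. For vectors with `‖b‖ ≤ ‖a‖` write
`‖a‖ ^ q • a - ‖b‖ ^ q • b = ‖a‖ ^ q • (a - b) + (‖a‖ ^ q - ‖b‖ ^ q) • b`; the first term is at most
`‖a‖ ^ q ‖a - b‖`, and by the scalar estimate the second is at most `q ‖a‖ ^ q (‖a‖ - ‖b‖)`.
-/

open Real

theorem Real.rpow_sub_rpow_mul_le {q x y : ℝ} (hq : 0 ≤ q) (hy : 0 ≤ y) (hyx : y ≤ x) :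
    (x ^ q - y ^ q) * y ≤ q * x ^ q * (x - y) := by
  rcases hy.eq_or_lt with rfl | hy
  · simp only [mul_zero, sub_zero]
    positivity
  rcases hyx.eq_or_lt with rfl | hyx
  · simp
  have hcont : ContinuousOn (· ^ q) (Set.Icc y x) :=
    continuousOn_id.rpow_const fun t ht => Or.inl (hy.trans_le ht.1).ne'
  obtain ⟨c, ⟨hyc, hcx⟩, hc⟩ := exists_hasDerivAt_eq_slope (· ^ q) (fun t => q * t ^ (q - 1))
    hyx hcont fun t ht => hasDerivAt_rpow_const (Or.inl (hy.trans ht.1).ne')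
  have hc0 : 0 < c := hy.trans hyc
  have hslope : x ^ q - y ^ q = q * c ^ (q - 1) * (x - y) := by
    rw [hc]
    field_simp [(sub_pos.2 hyx).ne']
  calc (x ^ q - y ^ q) * y = q * (c ^ (q - 1) * y) * (x - y) := by rw [hslope]; ring
    _ ≤ q * (c ^ (q - 1) * c) * (x - y) := by gcongr
    _ = q * c ^ q * (x - y) := by rw [← rpow_add_one hc0.ne', sub_add_cancel]
    _ ≤ q * x ^ q * (x - y) := by gcongr

section

variable {E : Type*} [SeminormedAddCommGroup E] [NormedSpace ℝ E] {q : ℝ}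

theorem norm_rpow_smul_sub_rpow_smul_le_of_norm_le (hq : 0 ≤ q) {a b : E} (hab : ‖b‖ ≤ ‖a‖) :
    ‖‖a‖ ^ q • a - ‖b‖ ^ q • b‖ ≤ (q + 1) * ‖a‖ ^ q * ‖a - b‖ := by
  have hmono : ‖b‖ ^ q ≤ ‖a‖ ^ q := rpow_le_rpow (norm_nonneg b) hab hq
  calc ‖‖a‖ ^ q • a - ‖b‖ ^ q • b‖ = ‖‖a‖ ^ q • (a - b) + (‖a‖ ^ q - ‖b‖ ^ q) • b‖ := by
        congr 1; module
    _ ≤ ‖a‖ ^ q * ‖a - b‖ + (‖a‖ ^ q - ‖b‖ ^ q) * ‖b‖ := by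
        refine norm_add_le_of_le ?_ ?_ <;> rw [norm_smul, Real.norm_of_nonneg]
        exacts [by positivity, sub_nonneg.2 hmono]
    _ ≤ ‖a‖ ^ q * ‖a - b‖ + q * ‖a‖ ^ q * (‖a‖ - ‖b‖) := by
        gcongr _ + ?_; exact rpow_sub_rpow_mul_le hq (norm_nonneg b) hab
    _ ≤ ‖a‖ ^ q * ‖a - b‖ + q * ‖a‖ ^ q * ‖a - b‖ := by gcongr; exact norm_sub_norm_le a b
    _ = (q + 1) * ‖a‖ ^ q * ‖a - b‖ := by ring

theorem norm_rpow_smul_sub_rpow_smul_le (hq : 0 ≤ q) (a b : E) :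
    ‖‖a‖ ^ q • a - ‖b‖ ^ q • b‖ ≤ (q + 1) * max ‖a‖ ‖b‖ ^ q * ‖a - b‖ := by
  rcases le_total ‖b‖ ‖a‖ with hab | hba
  · rw [max_eq_left hab]
    exact norm_rpow_smul_sub_rpow_smul_le_of_norm_le hq hab
  · rw [max_eq_right hba, norm_sub_rev, norm_sub_rev a]
    exact norm_rpow_smul_sub_rpow_smul_le_of_norm_le hq hba

end

theorem pLaplacian_lipschitz_explicit (p : ℝ) (hp : p > 2) (n : ℕ)
    (a b : EuclideanSpace ℝ (Fin n)) :
    ‖(‖a‖ ^ (p - 2)) • a - (‖b‖ ^ (p - 2)) • b‖ ≤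
      (p - 1) * (‖a‖ + ‖b‖) ^ (p - 2) * ‖a - b‖ := by
  have hq : 0 ≤ p - 2 := by linarith
  calc ‖(‖a‖ ^ (p - 2)) • a - (‖b‖ ^ (p - 2)) • b‖
      ≤ (p - 2 + 1) * max ‖a‖ ‖b‖ ^ (p - 2) * ‖a - b‖ := norm_rpow_smul_sub_rpow_smul_le hq a b
    _ ≤ (p - 1) * (‖a‖ + ‖b‖) ^ (p - 2) * ‖a - b‖ := by
        rw [show p - 2 + 1 = p - 1 by ring]
        gcongr
        · linarith
        · exact max_le_add_of_nonneg (norm_nonneg a) (norm_nonneg b)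
end
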